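/- arXiv:2210.08752 — 2 statements merged into one kernel-verified Lean document; each statement's English description precedes it below -/
import Mathlib

section
/- Let X(r,s) = (ψ(r) + φ(s))/2 where ψ′(r) = (2rF′(r), F′(r)(1−r²), −F′(r)(1+r²)) and φ′(s) = (2sG′(s), G′(s)(1−s²), G′(s)(1+s²)) with F′(r) ≠ 0 and G′(s) ≠ 0. Then X_r and X_s are linearly independent whenever 1 + rs ≠ 0. -/
/-!
Up to the nonzero factors `F'(r)/2` and `G'(s)/2`, the vectors are `u = (2r, 1 - r², -(1 + r²))`
and `v = (2s, 1 - s², 1 + s²)`. In a relation `a u + b v = 0`, the sum and difference of the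
last two coordinates give `b = a r²` and `a = b s²`, and then `s` times the first coordinate
gives `a (1 + rs) = 0`.
-/

theorem LinearIndependent.pair_units_smul {R M : Type*} [Semiring R] [AddCommMonoid M]
    [Module R M] {x y : M} (h : LinearIndependent R ![x, y]) (a b : Rˣ) :
    LinearIndependent R ![a • x, b • y] := by
  convert h.units_smul ![a, b] using 1
  ext i : 1
  fin_cases i <;> rfl

theorem linearIndependent_pair_of_one_add_mul_ne_zero {r s : ℝ} (hrs : 1 + r * s ≠ 0) :
    LinearIndependent ℝ
      ![((2 * r, 1 - r ^ 2, -(1 + r ^ 2)) : ℝ × ℝ × ℝ), (2 * s, 1 - s ^ 2, 1 + s ^ 2)] := by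
  rw [LinearIndependent.pair_iff]
  intro a b h
  simp only [Prod.smul_mk, smul_eq_mul, Prod.mk_add_mk, Prod.mk_eq_zero] at h
  obtain ⟨h₁, h₂, h₃⟩ := h
  have ha : a = 0 := by
    have : a * (1 + r * s) = 0 := by linear_combination (h₂ - h₃ + s * h₁) / 2
    exact (mul_eq_zero.mp this).resolve_right hrs
  refine ⟨ha, ?_⟩
  linear_combination (h₂ + h₃) / 2 + r ^ 2 * ha

theorem stmt7_general (F G : ℝ → ℝ)
    (r s : ℝ) (hF' : deriv F r ≠ 0) (hG' : deriv G s ≠ 0) (hrs : 1 + r * s ≠ 0) :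
    LinearIndependent ℝ
      ![((2 : ℝ)⁻¹ • (2 * r * deriv F r, deriv F r * (1 - r ^ 2),
          -(deriv F r * (1 + r ^ 2))) : ℝ × ℝ × ℝ),
        ((2 : ℝ)⁻¹ • (2 * s * deriv G s, deriv G s * (1 - s ^ 2),
          deriv G s * (1 + s ^ 2)) : ℝ × ℝ × ℝ)] := by
  convert (linearIndependent_pair_of_one_add_mul_ne_zero hrs).pair_units_smul
    (.mk0 _ (div_ne_zero hF' two_ne_zero)) (.mk0 _ (div_ne_zero hG' two_ne_zero)) using 1
  ext i : 1
  fin_cases i <;> ext <;>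
    simp only [Fin.zero_eta, Fin.mk_one, Matrix.cons_val_zero, Matrix.cons_val_one,
      Matrix.cons_val_fin_one, Units.smul_mk0, Prod.smul_mk, smul_eq_mul] <;> ring

/-- With X_r = ψ′(r)/2 = (2rF′, F′(1−r²), −F′(1+r²))/2 and
X_s = φ′(s)/2 = (2sG′, G′(1−s²), G′(1+s²))/2, F′(r) ≠ 0, G′(s) ≠ 0,
the vectors X_r, X_s are linearly independent whenever 1 + rs ≠ 0. -/
theorem stmt7 (F G : ℝ → ℝ) (hF : ContDiff ℝ 2 F) (hG : ContDiff ℝ 2 G)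
    (r s : ℝ) (hF' : deriv F r ≠ 0) (hG' : deriv G s ≠ 0) (hrs : 1 + r * s ≠ 0) :
    LinearIndependent ℝ
      ![((2 : ℝ)⁻¹ • (2 * r * deriv F r, deriv F r * (1 - r ^ 2),
          -(deriv F r * (1 + r ^ 2))) : ℝ × ℝ × ℝ),
        ((2 : ℝ)⁻¹ • (2 * s * deriv G s, deriv G s * (1 - s ^ 2),
          deriv G s * (1 + s ^ 2)) : ℝ × ℝ × ℝ)] :=
  stmt7_general F G r s hF' hG' hrs
end

section
/- Let J: Ω → ℝ²ˣ² be continuous with J positive quasidefinite at every point (i.e. (J + Jᵀ)/2 positive definite) on a convex open Ω ⊆ ℝ². If f: Ω → ℝ² is differentiable with Df(x) = J(x) for all x, then f is injective. -/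
/-!
For `a ≠ b` in `Ω`, pair `f` with the direction `v = b - a`: by the mean value theorem along the
segment `[a, b]`, `⟨f b - f a, v⟩ = ⟨J z v, v⟩ > 0` for some `z` in the segment, so `f a ≠ f b`.
-/

open Set

section Pairing

variable {E F : Type*} [NormedAddCommGroup E] [NormedSpace ℝ E]
  [NormedAddCommGroup F] [NormedSpace ℝ F]
  {s : Set E} {f : E → F} {f' : E → E →L[ℝ] F}

theorem Convex.pairing_sub_lt_of_hasFDerivWithinAt (hs : Convex ℝ s)
    (hf : ∀ x ∈ s, HasFDerivWithinAt f (f' x) s x) (B : F →L[ℝ] E →L[ℝ] ℝ)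
    (hB : ∀ x ∈ s, ∀ v ≠ 0, 0 < B (f' x v) v) {a b : E} (ha : a ∈ s) (hb : b ∈ s)
    (hab : a ≠ b) : B (f a) (b - a) < B (f b) (b - a) := by
  obtain ⟨z, hz, hmvt⟩ := domain_mvt (f := fun x ↦ B (f x) (b - a))
    (fun x hx ↦ (B.flip (b - a)).hasFDerivAt.comp_hasFDerivWithinAt x (hf x hx)) hs ha hb
  have hpos : 0 < B (f' z (b - a)) (b - a) :=
    hB z (hs.segment_subset ha hb hz) (b - a) (sub_ne_zero.2 hab.symm)
  simp only [ContinuousLinearMap.comp_apply, ContinuousLinearMap.flip_apply] at hmvt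
  linarith

theorem Convex.injOn_of_hasFDerivWithinAt_of_pairing_pos (hs : Convex ℝ s)
    (hf : ∀ x ∈ s, HasFDerivWithinAt f (f' x) s x) (B : F →L[ℝ] E →L[ℝ] ℝ)
    (hB : ∀ x ∈ s, ∀ v ≠ 0, 0 < B (f' x v) v) : InjOn f s := by
  intro a ha b hb hfab
  by_contra hab
  have := hs.pairing_sub_lt_of_hasFDerivWithinAt hf B hB ha hb hab
  rw [hfab] at this
  exact this.false

end Pairing

noncomputable def dotProdCLM : (ℝ × ℝ) →L[ℝ] (ℝ × ℝ) →L[ℝ] ℝ :=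
  (ContinuousLinearMap.mul ℝ ℝ).bilinearComp (.fst ℝ ℝ ℝ) (.fst ℝ ℝ ℝ) +
    (ContinuousLinearMap.mul ℝ ℝ).bilinearComp (.snd ℝ ℝ ℝ) (.snd ℝ ℝ ℝ)

@[simp]
theorem dotProdCLM_apply (w v : ℝ × ℝ) : dotProdCLM w v = w.1 * v.1 + w.2 * v.2 := rfl

theorem stmt11_general (Ω : Set (ℝ × ℝ)) (hΩc : Convex ℝ Ω)
    (f : ℝ × ℝ → ℝ × ℝ) (J : ℝ × ℝ → (ℝ × ℝ) →L[ℝ] ℝ × ℝ)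
    (hdf : ∀ x ∈ Ω, HasFDerivAt f (J x) x)
    (hpos : ∀ x ∈ Ω, ∀ v : ℝ × ℝ, v ≠ 0 →
      (J x v).1 * v.1 + (J x v).2 * v.2 > 0) :
    Set.InjOn f Ω :=
  hΩc.injOn_of_hasFDerivWithinAt_of_pairing_pos (fun x hx ↦ (hdf x hx).hasFDerivWithinAt)
    dotProdCLM fun x hx v hv ↦ by simpa using hpos x hx v hv

/-- Gale–Nikaido: if f : Ω → ℝ² is differentiable on a convex open
Ω ⊆ ℝ² with continuous derivative J that is positive quasidefinite at every point
(i.e. ⟨J(x)v, v⟩ > 0 for all v ≠ 0), then f is injective on Ω. -/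
theorem stmt11 (Ω : Set (ℝ × ℝ)) (hΩo : IsOpen Ω) (hΩc : Convex ℝ Ω)
    (f : ℝ × ℝ → ℝ × ℝ) (J : ℝ × ℝ → (ℝ × ℝ) →L[ℝ] ℝ × ℝ)
    (hJcont : ContinuousOn J Ω)
    (hdf : ∀ x ∈ Ω, HasFDerivAt f (J x) x)
    (hpos : ∀ x ∈ Ω, ∀ v : ℝ × ℝ, v ≠ 0 →
      (J x v).1 * v.1 + (J x v).2 * v.2 > 0) :
    Set.InjOn f Ω :=
  stmt11_general Ω hΩc f J hdf hpos
end
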